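/- arXiv:2406.00705 — 5 statements merged into one kernel-verified Lean document; each statement's English description precedes it below -/
import Mathlib

section
/- Let H be a real Hilbert space, t0 > 0, and let ξ, M1 be positive constants with ξ ≠ 1/3. Let y : [t0,∞) → H be differentiable and let g : H → ℝ be a convex continuous function such that g(y(t) + ξ t y'(t)) ≤ M1/t³ for all t ≥ t0. Then there exist positive constants M2, M3 such that g(y(t)) ≤ M2/t³ + M3/t^{1/ξ} for all t ≥ t0. -/
open Filter Topology InnerProductSpace

/-!
Convexity reduces the claim to a scalar differential inequality. Take a continuous subgradient
`f` of `g` at `y t`; then `φ s = g (y t) + f (y s - y t)` is a differentiable minorant of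
`g ∘ y` that is exact at `s = t` and satisfies `φ + ξ s φ' ≤ M1 / s³`. With `p = 1/ξ`, this
says that `s ^ p φ s - c s ^ (p - 3)` is nonincreasing, with `c = M1 / (ξ (p - 3))`, so
`g (y t) = φ t` is bounded by `c / t³ + A / t ^ p`, where `A` is uniform in `t` because
`φ t0 ≤ g (y t0)`.
-/

open Set

theorem ConvexOn.exists_subgradient {E : Type*} [TopologicalSpace E] [AddCommGroup E]
    [Module ℝ E] [IsTopologicalAddGroup E] [ContinuousSMul ℝ E] {g : E → ℝ}
    (hg : ConvexOn ℝ univ g) (hgc : Continuous g) (x₀ : E) :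
    ∃ f : StrongDual ℝ E, ∀ x, g x₀ + f (x - x₀) ≤ g x := by
  have hconv : Convex ℝ {p : E × ℝ | g p.1 < p.2} := by
    simpa only [mem_univ, true_and] using hg.convex_strict_epigraph
  have hopen : IsOpen {p : E × ℝ | g p.1 < p.2} :=
    isOpen_lt (hgc.comp continuous_fst) continuous_snd
  obtain ⟨ℓ, hℓ⟩ :=
    geometric_hahn_banach_open_point hconv hopen (x := (x₀, g x₀)) (lt_irrefl (g x₀))
  set a := ℓ (0, 1)
  have hsplit : ∀ x r, ℓ (x, r) = ℓ (x, 0) + r * a := fun x r => by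
    rw [← smul_eq_mul, ← map_smul, ← map_add, Prod.smul_mk, smul_zero, smul_eq_mul, mul_one,
      Prod.mk_add_mk, add_zero, zero_add]
  -- the separating hyperplane is not vertical
  have ha : a < 0 := by
    have := hℓ (x₀, g x₀ + 1) (show g x₀ < g x₀ + 1 from lt_add_one _)
    rw [hsplit x₀ (g x₀ + 1), hsplit x₀ (g x₀)] at this
    linarith
  refine ⟨(-a)⁻¹ • ℓ.comp (ContinuousLinearMap.inl ℝ E ℝ), fun x => ?_⟩
  have key : ℓ (x, 0) + g x * a ≤ ℓ (x₀, 0) + g x₀ * a := by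
    refine le_of_forall_pos_lt_add fun ε hε => ?_
    have := hℓ (x, g x + ε / -a) (lt_add_of_pos_right _ (div_pos hε (neg_pos.2 ha)))
    rw [hsplit x, hsplit x₀ (g x₀), add_mul, div_mul_eq_mul_div, div_neg,
      mul_div_cancel_right₀ _ ha.ne] at this
    linarith
  have hf : ((-a)⁻¹ • ℓ.comp (ContinuousLinearMap.inl ℝ E ℝ)) (x - x₀)
      = (ℓ (x, 0) - ℓ (x₀, 0)) / -a := by
    simp [div_eq_inv_mul, ← map_sub]
  rw [hf, ← le_sub_iff_add_le', div_le_iff₀ (neg_pos.2 ha)]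
  linarith

theorem antitoneOn_rpow_mul_sub_of_add_mul_deriv_le {t₀ ξ M : ℝ} {k : ℕ} {φ φ' : ℝ → ℝ}
    (ht₀ : 0 < t₀) (hξ : 0 < ξ) (hk : 1 / ξ ≠ k)
    (hφ : ∀ s ∈ Ici t₀, HasDerivAt φ (φ' s) s)
    (hb : ∀ s ∈ Ici t₀, φ s + ξ * s * φ' s ≤ M / s ^ k) :
    AntitoneOn (fun s => s ^ (1 / ξ) * φ s - M / (ξ * (1 / ξ - k)) * s ^ (1 / ξ - k))
      (Ici t₀) := by
  set p := 1 / ξ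
  set c := M / (ξ * (p - k))
  have hderiv : ∀ s ∈ Ici t₀, HasDerivAt
      (fun s => s ^ p * φ s - c * s ^ (p - k))
      (p * s ^ (p - 1) * φ s + s ^ p * φ' s - c * ((p - k) * s ^ (p - k - 1))) s := by
    intro s hs
    have hs₀ : s ≠ 0 := (ht₀.trans_le hs).ne'
    exact ((Real.hasDerivAt_rpow_const (Or.inl hs₀)).mul (hφ s hs)).sub
      ((Real.hasDerivAt_rpow_const (Or.inl hs₀)).const_mul c)
  refine antitoneOn_of_hasDerivWithinAt_nonpos (convex_Ici t₀)
    (fun s hs => (hderiv s hs).continuousAt.continuousWithinAt)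
    (fun s hs => (hderiv s (interior_subset hs)).hasDerivWithinAt) fun s hs => ?_
  rw [interior_Ici] at hs
  have hs₀ : 0 < s := ht₀.trans hs
  have hfactor : p * s ^ (p - 1) * φ s + s ^ p * φ' s - c * ((p - k) * s ^ (p - k - 1))
      = s ^ (p - 1) / ξ * (φ s + ξ * s * φ' s - M / s ^ k) := by
    have hp : p * ξ = 1 := one_div_mul_cancel hξ.ne'
    have hc : c * (p - k) * ξ = M := by
      simp only [c]; field_simp [sub_ne_zero.2 hk]
    rw [show p - k - 1 = p - 1 - k by ring, Real.rpow_sub_natCast hs₀.ne',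
      show p = p - 1 + 1 by ring, Real.rpow_add_one hs₀.ne', show p - 1 + 1 = p by ring]
    field_simp
    linear_combination (φ s * s ^ k) * hp - hc
  rw [hfactor]
  exact mul_nonpos_of_nonneg_of_nonpos (by positivity)
    (sub_nonpos.2 (hb s (Ioi_subset_Ici_self hs)))

theorem le_div_pow_add_div_rpow_of_rpow_mul_sub_le {p c A a t : ℝ} {k : ℕ} (ht : 0 < t)
    (h : t ^ p * a - c * t ^ (p - k) ≤ A) : a ≤ c / t ^ k + A / t ^ p := by
  have htp : 0 < t ^ p := Real.rpow_pos_of_pos ht p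
  rw [Real.rpow_sub_natCast ht.ne'] at h
  have hsum : c / t ^ k + A / t ^ p = (c * (t ^ p / t ^ k) + A) / t ^ p := by
    field_simp
  rw [hsum, le_div_iff₀ htp]
  linarith

theorem stmt0_general
    {H : Type*} [NormedAddCommGroup H] [InnerProductSpace ℝ H]
    (t0 ξ M1 : ℝ) (ht0 : 0 < t0) (hξ : 0 < ξ) (hξ' : ξ ≠ 1 / 3)
    (y : ℝ → H) (hy : ∀ t, t0 ≤ t → DifferentiableAt ℝ y t)
    (g : H → ℝ) (hgconv : ConvexOn ℝ Set.univ g) (hgcont : Continuous g)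
    (hbound : ∀ t, t0 ≤ t → g (y t + (ξ * t) • deriv y t) ≤ M1 / t ^ 3) :
    ∃ M2 M3 : ℝ, 0 < M2 ∧ 0 < M3 ∧
      ∀ t, t0 ≤ t → g (y t) ≤ M2 / t ^ 3 + M3 / t ^ (1 / ξ) := by
  have h3 : 1 / ξ ≠ ((3 : ℕ) : ℝ) := by
    rw [ne_eq, one_div, inv_eq_iff_eq_inv]; norm_num [hξ']
  set c := M1 / (ξ * (1 / ξ - (3 : ℕ)))
  set A := t0 ^ (1 / ξ) * g (y t0) - c * t0 ^ (1 / ξ - (3 : ℕ))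
  refine ⟨|c| + 1, |A| + 1, by positivity, by positivity, fun t ht => ?_⟩
  obtain ⟨f, hf⟩ := hgconv.exists_subgradient hgcont (y t)
  set φ := fun s => g (y t) + f (y s - y t)
  have hφ : ∀ s ∈ Ici t0, HasDerivAt φ (f (deriv y s)) s := fun s hs =>
    (f.hasFDerivAt.comp_hasDerivAt s ((hy s hs).hasDerivAt.sub_const (y t))).const_add
      (g (y t))
  have hb : ∀ s ∈ Ici t0, φ s + ξ * s * f (deriv y s) ≤ M1 / s ^ 3 := fun s hs => by
    have := (hf _).trans (hbound s hs)
    rwa [add_sub_right_comm, map_add, map_smul, smul_eq_mul, ← add_assoc] at this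
  have hanti := antitoneOn_rpow_mul_sub_of_add_mul_deriv_le ht0 hξ h3 hφ hb
    self_mem_Ici ht ht
  have hA : t0 ^ (1 / ξ) * φ t0 - c * t0 ^ (1 / ξ - (3 : ℕ)) ≤ A :=
    sub_le_sub_right (mul_le_mul_of_nonneg_left (hf _) (by positivity)) _
  have htpos := ht0.trans_le ht
  have key := le_div_pow_add_div_rpow_of_rpow_mul_sub_le htpos (hanti.trans hA)
  simp only [φ, sub_self, map_zero, add_zero] at key
  refine key.trans ?_
  gcongr ?_ / _ + ?_ / _
  · exact (le_abs_self c).trans (lt_add_one _).le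
  · exact (le_abs_self A).trans (lt_add_one _).le

theorem stmt0
    {H : Type*} [NormedAddCommGroup H] [InnerProductSpace ℝ H] [CompleteSpace H]
    (t0 ξ M1 : ℝ) (ht0 : 0 < t0) (hξ : 0 < ξ) (hξ' : ξ ≠ 1 / 3) (hM1 : 0 < M1)
    (y : ℝ → H) (hy : ∀ t, t0 ≤ t → DifferentiableAt ℝ y t)
    (g : H → ℝ) (hgconv : ConvexOn ℝ Set.univ g) (hgcont : Continuous g)
    (hbound : ∀ t, t0 ≤ t → g (y t + (ξ * t) • deriv y t) ≤ M1 / t ^ 3) :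
    ∃ M2 M3 : ℝ, 0 < M2 ∧ 0 < M3 ∧
      ∀ t, t0 ≤ t → g (y t) ≤ M2 / t ^ 3 + M3 / t ^ (1 / ξ) :=
  stmt0_general t0 ξ M1 ht0 hξ hξ' y hy g hgconv hgcont hbound
end

section
/- Let Ω be a nonempty closed convex subset of H, let V : H → H be ℓ-strongly pseudomonotone and M-Lipschitz continuous, let 0 < ν < 4ℓ/M², and set κ1 = 1 − νM²/(4ℓ) and κ2 = νℓ/(1 + νℓ + νM). Let x* ∈ Ω be a solution of the variational inequality VI(V,Ω). Then for every v̄ ∈ H: ⟨v̄ − Π_Ω(v̄ − νV(v̄)), v̄ − x*⟩ ≥ κ1‖v̄ − Π_Ω(v̄ − νV(v̄))‖² and ‖v̄ − Π_Ω(v̄ − νV(v̄))‖ ≥ κ2‖v̄ − x*‖. -/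
/-!
Write `p = Π_Ω(v - ν V v)`. The projection inequality tested at `x*`, strong pseudomonotonicity
at `p` (applicable because `x*` solves the variational inequality) and the Lipschitz bound
between `v` and `p` combine to
`⟪v - p, p - x*⟫ ≥ ν ℓ ‖p - x*‖² - ν M ‖v - p‖ ‖p - x*‖`.
Adding `‖v - p‖²` and completing the square gives the first estimate; bounding the left side by
Cauchy–Schwarz gives `ν ℓ ‖p - x*‖ ≤ (1 + ν M) ‖v - p‖`, and the triangle inequality through `p`
gives the second.
-/

open InnerProductSpace

theorem mul_le_sq_div_four_mul_add_mul_sq {ℓ : ℝ} (hℓ : 0 < ℓ) (a b : ℝ) :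
    a * b ≤ a ^ 2 / (4 * ℓ) + ℓ * b ^ 2 := by
  have key : a ^ 2 / (4 * ℓ) + ℓ * b ^ 2 - a * b = (ℓ * b - a / 2) ^ 2 / ℓ := by
    field_simp
    ring
  have : 0 ≤ (ℓ * b - a / 2) ^ 2 / ℓ := by positivity
  linarith

section ProjectedResidual

variable {H : Type*} [NormedAddCommGroup H] [InnerProductSpace ℝ H]
  {V : H → H} {ℓ M ν : ℝ} {v p x : H}

theorem le_inner_sub_sub_of_projection (hν : 0 ≤ ν)
    (hproj : 0 ≤ ⟪v - ν • V v - p, p - x⟫_ℝ) (hpm : ℓ * ‖p - x‖ ^ 2 ≤ ⟪V p, p - x⟫_ℝ)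
    (hLip : ‖V v - V p‖ ≤ M * ‖v - p‖) :
    ν * ℓ * ‖p - x‖ ^ 2 - ν * M * ‖v - p‖ * ‖p - x‖ ≤ ⟪v - p, p - x⟫_ℝ := by
  have split : ⟪v - p, p - x⟫_ℝ =
      ⟪v - ν • V v - p, p - x⟫_ℝ + ν * ⟪V p, p - x⟫_ℝ + ν * ⟪V v - V p, p - x⟫_ℝ := by
    simp only [inner_sub_left, real_inner_smul_left]
    ring
  have hlip_inner : -(M * ‖v - p‖ * ‖p - x‖) ≤ ⟪V v - V p, p - x⟫_ℝ := by
    have hcs := neg_le_of_abs_le (abs_real_inner_le_norm (V v - V p) (p - x))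
    nlinarith [norm_nonneg (p - x)]
  rw [split]
  nlinarith [mul_le_mul_of_nonneg_left hpm hν, mul_le_mul_of_nonneg_left hlip_inner hν]

theorem mul_sq_norm_le_inner_sub_sub (hℓ : 0 < ℓ) (hν : 0 ≤ ν)
    (h : ν * ℓ * ‖p - x‖ ^ 2 - ν * M * ‖v - p‖ * ‖p - x‖ ≤ ⟪v - p, p - x⟫_ℝ) :
    (1 - ν * M ^ 2 / (4 * ℓ)) * ‖v - p‖ ^ 2 ≤ ⟪v - p, v - x⟫_ℝ := by
  have split : ⟪v - p, v - x⟫_ℝ = ‖v - p‖ ^ 2 + ⟪v - p, p - x⟫_ℝ := by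
    rw [← real_inner_self_eq_norm_sq, ← inner_add_right, sub_add_sub_cancel]
  have amgm := mul_le_mul_of_nonneg_left
    (mul_le_sq_div_four_mul_add_mul_sq hℓ (M * ‖v - p‖) ‖p - x‖) hν
  have expand : ν * ((M * ‖v - p‖) ^ 2 / (4 * ℓ) + ℓ * ‖p - x‖ ^ 2) =
      ν * M ^ 2 / (4 * ℓ) * ‖v - p‖ ^ 2 + ν * ℓ * ‖p - x‖ ^ 2 := by ring
  rw [split]
  linarith

theorem mul_norm_le_norm_sub (hν : 0 ≤ ν) (hℓ : 0 ≤ ℓ) (hM : 0 ≤ M)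
    (h : ν * ℓ * ‖p - x‖ ^ 2 - ν * M * ‖v - p‖ * ‖p - x‖ ≤ ⟪v - p, p - x⟫_ℝ) :
    ν * ℓ / (1 + ν * ℓ + ν * M) * ‖v - x‖ ≤ ‖v - p‖ := by
  have hcs : ⟪v - p, p - x⟫_ℝ ≤ ‖v - p‖ * ‖p - x‖ := real_inner_le_norm _ _
  have hνℓ : 0 ≤ ν * ℓ := mul_nonneg hν hℓ
  have hνM : 0 ≤ ν * M := mul_nonneg hν hM
  have near : ν * ℓ * ‖p - x‖ ≤ (1 + ν * M) * ‖v - p‖ := by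
    rcases (norm_nonneg (p - x)).eq_or_lt with h0 | hpos
    · rw [← h0, mul_zero]
      positivity
    · nlinarith
  have htri : ‖v - x‖ ≤ ‖v - p‖ + ‖p - x‖ := norm_sub_le_norm_sub_add_norm_sub v p x
  rw [div_mul_eq_mul_div, div_le_iff₀ (by positivity)]
  nlinarith [mul_le_mul_of_nonneg_left htri hνℓ]

end ProjectedResidual

theorem stmt11_general
    {H : Type*} [NormedAddCommGroup H] [InnerProductSpace ℝ H]
    (Ω : Set H)
    (V : H → H) (ℓ M ν : ℝ) (hℓ : 0 < ℓ) (hM : 0 < M)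
    (hpm : ∀ x y : H, 0 ≤ ⟪V y, x - y⟫_ℝ → ℓ * ‖x - y‖ ^ 2 ≤ ⟪V x, x - y⟫_ℝ)
    (hLip : ∀ x y : H, ‖V x - V y‖ ≤ M * ‖x - y‖)
    (hν : 0 < ν)
    (proj : H → H)
    (hproj : ∀ v : H, proj v ∈ Ω ∧ ∀ y ∈ Ω, ⟪v - proj v, y - proj v⟫_ℝ ≤ 0)
    (xs : H) (hxsΩ : xs ∈ Ω) (hxs : ∀ y ∈ Ω, 0 ≤ ⟪V xs, y - xs⟫_ℝ) :
    ∀ v : H,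
      (1 - ν * M ^ 2 / (4 * ℓ)) * ‖v - proj (v - ν • V v)‖ ^ 2 ≤
        ⟪v - proj (v - ν • V v), v - xs⟫_ℝ ∧
      ν * ℓ / (1 + ν * ℓ + ν * M) * ‖v - xs‖ ≤ ‖v - proj (v - ν • V v)‖ := by
  intro v
  obtain ⟨hpΩ, hvar⟩ := hproj (v - ν • V v)
  have hproj_xs : 0 ≤ ⟪v - ν • V v - proj (v - ν • V v), proj (v - ν • V v) - xs⟫_ℝ := by
    rw [← neg_sub xs, inner_neg_right]
    linarith [hvar xs hxsΩ]
  have key := le_inner_sub_sub_of_projection hν.le hproj_xs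
    (hpm _ xs (hxs _ hpΩ)) (hLip v _)
  exact ⟨mul_sq_norm_le_inner_sub_sub hℓ hν.le key, mul_norm_le_norm_sub hν.le hℓ.le hM.le key⟩

theorem stmt11
    {H : Type*} [NormedAddCommGroup H] [InnerProductSpace ℝ H] [CompleteSpace H]
    (Ω : Set H) (hne : Ω.Nonempty) (hcl : IsClosed Ω) (hconv : Convex ℝ Ω)
    (V : H → H) (ℓ M ν : ℝ) (hℓ : 0 < ℓ) (hM : 0 < M)
    (hpm : ∀ x y : H, 0 ≤ ⟪V y, x - y⟫_ℝ → ℓ * ‖x - y‖ ^ 2 ≤ ⟪V x, x - y⟫_ℝ)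
    (hLip : ∀ x y : H, ‖V x - V y‖ ≤ M * ‖x - y‖)
    (hν : 0 < ν) (hν' : ν < 4 * ℓ / M ^ 2)
    (proj : H → H)
    (hproj : ∀ v : H, proj v ∈ Ω ∧ ∀ y ∈ Ω, ⟪v - proj v, y - proj v⟫_ℝ ≤ 0)
    (xs : H) (hxsΩ : xs ∈ Ω) (hxs : ∀ y ∈ Ω, 0 ≤ ⟪V xs, y - xs⟫_ℝ) :
    ∀ v : H,
      (1 - ν * M ^ 2 / (4 * ℓ)) * ‖v - proj (v - ν • V v)‖ ^ 2 ≤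
        ⟪v - proj (v - ν • V v), v - xs⟫_ℝ ∧
      ν * ℓ / (1 + ν * ℓ + ν * M) * ‖v - xs‖ ≤ ‖v - proj (v - ν • V v)‖ :=
  stmt11_general Ω V ℓ M ν hℓ hM hpm hLip hν proj hproj xs hxsΩ hxs
end

section
/- Let f : H → ℝ be convex and differentiable, attaining its minimum value f* at some point x* ∈ H. Let α0 > 0, t0 > 0, ξ2 > 0, ξ1 ≥ 0, ν1 = (ξ1 + 1)/ξ2 and ν2 = ξ1/ξ2 + 2. Let x : [t0,∞) → H be three times differentiable and satisfy x'''(t) + (ν2/t)x''(t) + (ν1/t²)x'(t) = −α0 ∇f(x(t) + ξ1 t x'(t) + ξ2 t² x''(t)) for all t ≥ t0. Then there exists a constant C > 0 such that f(x(t) + ξ1 t x'(t) + ξ2 t² x''(t)) − f* ≤ C/t³ for all t ≥ t0. -/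
/-!
The combination `y = x + ξ1 t x' + ξ2 t² x''` turns the third-order equation into the
time-rescaled gradient flow `y' = -α0 ξ2 t² ∇f(y)`. Along such a flow, with `B' = α0 ξ2 t²`
and `B ≥ 0`, the energy `B(t) (f(y) - f(z)) + ‖y - z‖² / 2` is nonincreasing for every
point `z`, by the gradient inequality of convex functions; taking `B(t) = α0 ξ2 t³ / 3`
gives the `O(1/t³)` rate.
-/

open InnerProductSpace Set

theorem ConvexOn.add_fderiv_sub_le {E : Type*} [NormedAddCommGroup E] [NormedSpace ℝ E]
    {f : E → ℝ} (hf : ConvexOn ℝ univ f) {w : E} (hd : DifferentiableAt ℝ f w) (z : E) :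
    f w + fderiv ℝ f w (z - w) ≤ f z := by
  have hline : ConvexOn ℝ univ (f ∘ AffineMap.lineMap (k := ℝ) w z) := by
    simpa using hf.comp_affineMap (AffineMap.lineMap w z : ℝ →ᵃ[ℝ] E)
  have hderiv : HasDerivAt (f ∘ AffineMap.lineMap (k := ℝ) w z) (fderiv ℝ f w (z - w)) 0 := by
    have h := AffineMap.hasDerivAt_lineMap (a := w) (b := z) (x := (0 : ℝ))
    rw [← AffineMap.lineMap_apply_zero w z (k := ℝ)] at hd
    simpa using hd.hasFDerivAt.comp_hasDerivAt 0 h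
  have := hline.le_slope_of_hasDerivAt (mem_univ 0) (mem_univ 1) one_pos hderiv
  simp only [slope_def_field, Function.comp_apply, AffineMap.lineMap_apply_zero,
    AffineMap.lineMap_apply_one, sub_zero, div_one] at this
  linarith

theorem hasDerivAt_add_smul_deriv_add_smul_deriv_deriv {E : Type*} [NormedAddCommGroup E]
    [NormedSpace ℝ E] {x : ℝ → E} {t ξ1 ξ2 : ℝ} {v : E} (ht : t ≠ 0) (hξ2 : ξ2 ≠ 0)
    (h1 : DifferentiableAt ℝ x t) (h2 : DifferentiableAt ℝ (deriv x) t)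
    (h3 : DifferentiableAt ℝ (deriv (deriv x)) t)
    (hode : deriv (deriv (deriv x)) t + ((ξ1 / ξ2 + 2) / t) • deriv (deriv x) t +
      ((ξ1 + 1) / ξ2 / t ^ 2) • deriv x t = -v) :
    HasDerivAt (fun s ↦ x s + (ξ1 * s) • deriv x s + (ξ2 * s ^ 2) • deriv (deriv x) s)
      (-(ξ2 * t ^ 2) • v) t := by
  have hlin : HasDerivAt (fun s : ℝ ↦ ξ1 * s) ξ1 t := by
    simpa using (hasDerivAt_id t).const_mul ξ1
  have hquad : HasDerivAt (fun s : ℝ ↦ ξ2 * s ^ 2) (ξ2 * (2 * t)) t := by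
    simpa using (hasDerivAt_pow 2 t).const_mul ξ2
  refine ((h1.hasDerivAt.add (hlin.smul h2.hasDerivAt)).add
    (hquad.smul h3.hasDerivAt)).congr_deriv ?_
  rw [eq_sub_of_add_eq (eq_sub_of_add_eq hode)]
  match_scalars <;> field_simp <;> ring

theorem ConvexOn.antitoneOn_gradientFlow_energy {H : Type*} [NormedAddCommGroup H] [InnerProductSpace ℝ H]
    [CompleteSpace H] {f : H → ℝ} (hf : ConvexOn ℝ univ f) (hd : Differentiable ℝ f) (z : H)
    {D : Set ℝ} (hD : Convex ℝ D) {y : ℝ → H} {B β : ℝ → ℝ}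
    (hB : ∀ t ∈ D, HasDerivAt B (β t) t) (hβ : ∀ t ∈ D, 0 ≤ β t) (hB₀ : ∀ t ∈ D, 0 ≤ B t)
    (hy : ∀ t ∈ D, HasDerivAt y (-(β t) • gradient f (y t)) t) :
    AntitoneOn (fun t ↦ B t * (f (y t) - f z) + ‖y t - z‖ ^ 2 / 2) D := by
  have hE : ∀ t ∈ D, HasDerivAt (fun t ↦ B t * (f (y t) - f z) + ‖y t - z‖ ^ 2 / 2)
      (β t * (f (y t) - f z - ⟪gradient f (y t), y t - z⟫_ℝ) -
        B t * β t * ‖gradient f (y t)‖ ^ 2) t := by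
    intro t ht
    have hfy : HasDerivAt (fun s ↦ f (y s)) (-β t * ‖gradient f (y t)‖ ^ 2) t := by
      refine ((hd (y t)).hasFDerivAt.comp_hasDerivAt t (hy t ht)).congr_deriv ?_
      rw [← inner_gradient_left, inner_smul_right, real_inner_self_eq_norm_sq]
    refine ((hB t ht).mul (hfy.sub_const (f z)) |>.add
      (((hy t ht).sub_const z).norm_sq.div_const 2)).congr_deriv ?_
    rw [inner_smul_right, real_inner_comm]
    ring
  refine antitoneOn_of_hasDerivWithinAt_nonpos hD
    (fun t ht ↦ (hE t ht).continuousAt.continuousWithinAt)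
    (fun t ht ↦ (hE t (interior_subset ht)).hasDerivWithinAt) fun t ht ↦ ?_
  replace ht := interior_subset ht
  have hgrad : f (y t) - f z - ⟪gradient f (y t), y t - z⟫_ℝ ≤ 0 := by
    have := hf.add_fderiv_sub_le (hd (y t)) z
    rw [← inner_gradient_left, ← neg_sub, inner_neg_right] at this
    linarith
  have := mul_nonpos_of_nonneg_of_nonpos (hβ t ht) hgrad
  have := mul_nonneg (mul_nonneg (hB₀ t ht) (hβ t ht)) (sq_nonneg ‖gradient f (y t)‖)
  linarith

theorem stmt13_general
    {H : Type*} [NormedAddCommGroup H] [InnerProductSpace ℝ H] [CompleteSpace H]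
    (f : H → ℝ) (hconv : ConvexOn ℝ Set.univ f) (hdiff : Differentiable ℝ f)
    (xs : H)
    (α0 t0 ξ1 ξ2 ν1 ν2 : ℝ) (hα0 : 0 < α0) (ht0 : 0 < t0)
    (hξ2 : 0 < ξ2)
    (hν1 : ν1 = (ξ1 + 1) / ξ2) (hν2 : ν2 = ξ1 / ξ2 + 2)
    (x : ℝ → H)
    (hx1 : ∀ t, t0 ≤ t → DifferentiableAt ℝ x t)
    (hx2 : ∀ t, t0 ≤ t → DifferentiableAt ℝ (deriv x) t)
    (hx3 : ∀ t, t0 ≤ t → DifferentiableAt ℝ (deriv (deriv x)) t)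
    (hode : ∀ t, t0 ≤ t →
      deriv (deriv (deriv x)) t + (ν2 / t) • deriv (deriv x) t +
        (ν1 / t ^ 2) • deriv x t =
      -(α0 • gradient f (x t + (ξ1 * t) • deriv x t + (ξ2 * t ^ 2) • deriv (deriv x) t))) :
    ∃ C : ℝ, 0 < C ∧ ∀ t, t0 ≤ t →
      f (x t + (ξ1 * t) • deriv x t + (ξ2 * t ^ 2) • deriv (deriv x) t) - f xs ≤
        C / t ^ 3 := by
  subst hν1 hν2
  set y : ℝ → H := fun t ↦ x t + (ξ1 * t) • deriv x t + (ξ2 * t ^ 2) • deriv (deriv x) t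
  set κ := α0 * ξ2
  have hκ : 0 < κ := mul_pos hα0 hξ2
  have hy : ∀ t ∈ Ici t0, HasDerivAt y (-(κ * t ^ 2) • gradient f (y t)) t := fun t ht ↦
    (hasDerivAt_add_smul_deriv_add_smul_deriv_deriv (ht0.trans_le ht).ne' hξ2.ne' (hx1 t ht)
      (hx2 t ht) (hx3 t ht) (hode t ht)).congr_deriv (by rw [smul_smul]; congr 1; ring)
  have hB : ∀ t ∈ Ici t0, HasDerivAt (fun s ↦ κ / 3 * s ^ 3) (κ * t ^ 2) t := fun t _ ↦
    ((hasDerivAt_pow 3 t).const_mul (κ / 3)).congr_deriv (by ring)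
  have hE := hconv.antitoneOn_gradientFlow_energy hdiff xs (convex_Ici t0) hB
    (fun t _ ↦ by positivity) (fun t ht ↦ by have := ht0.trans_le ht; positivity) hy
  set E := fun t ↦ κ / 3 * t ^ 3 * (f (y t) - f xs) + ‖y t - xs‖ ^ 2 / 2
  refine ⟨3 * |E t0| / κ + 1, by positivity, fun t ht ↦ ?_⟩
  have hbound : κ / 3 * t ^ 3 * (f (y t) - f xs) ≤ |E t0| := calc
    _ ≤ E t := le_add_of_nonneg_right (by positivity)
    _ ≤ E t0 := hE self_mem_Ici ht ht
    _ ≤ |E t0| := le_abs_self _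
  have : (f (y t) - f xs) * t ^ 3 ≤ 3 * |E t0| / κ := by rw [le_div_iff₀ hκ]; linarith
  rw [le_div_iff₀ (pow_pos (ht0.trans_le ht) 3)]
  linarith

theorem stmt13
    {H : Type*} [NormedAddCommGroup H] [InnerProductSpace ℝ H] [CompleteSpace H]
    (f : H → ℝ) (hconv : ConvexOn ℝ Set.univ f) (hdiff : Differentiable ℝ f)
    (xs : H) (hmin : ∀ z : H, f xs ≤ f z)
    (α0 t0 ξ1 ξ2 ν1 ν2 : ℝ) (hα0 : 0 < α0) (ht0 : 0 < t0)
    (hξ2 : 0 < ξ2) (hξ1 : 0 ≤ ξ1)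
    (hν1 : ν1 = (ξ1 + 1) / ξ2) (hν2 : ν2 = ξ1 / ξ2 + 2)
    (x : ℝ → H)
    (hx1 : ∀ t, t0 ≤ t → DifferentiableAt ℝ x t)
    (hx2 : ∀ t, t0 ≤ t → DifferentiableAt ℝ (deriv x) t)
    (hx3 : ∀ t, t0 ≤ t → DifferentiableAt ℝ (deriv (deriv x)) t)
    (hode : ∀ t, t0 ≤ t →
      deriv (deriv (deriv x)) t + (ν2 / t) • deriv (deriv x) t +
        (ν1 / t ^ 2) • deriv x t =
      -(α0 • gradient f (x t + (ξ1 * t) • deriv x t + (ξ2 * t ^ 2) • deriv (deriv x) t))) :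
    ∃ C : ℝ, 0 < C ∧ ∀ t, t0 ≤ t →
      f (x t + (ξ1 * t) • deriv x t + (ξ2 * t ^ 2) • deriv (deriv x) t) - f xs ≤
        C / t ^ 3 :=
  stmt13_general f hconv hdiff xs α0 t0 ξ1 ξ2 ν1 ν2 hα0 ht0 hξ2 hν1 hν2 x hx1 hx2 hx3 hode
end

section
/- Let H be a real Hilbert space, let A : H → H be ω_A-cocoercive, let J_B, J_C : H → H be firmly nonexpansive, and let γ ∈ (0, 2ω_A). Define T : H → H by T = J_B ∘ (2J_C − I − γ A ∘ J_C) + I − J_C, and U = I − T. Then U is cocoercive with modulus (4ω_A − γ)/(4ω_A); that is, ⟨U(x) − U(y), x − y⟩ ≥ ((4ω_A − γ)/(4ω_A))‖U(x) − U(y)‖² for all x, y ∈ H. -/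
open InnerProductSpace

theorem stmt17
    {H : Type*} [NormedAddCommGroup H] [InnerProductSpace ℝ H] [CompleteSpace H]
    (A JB JC : H → H) (ωA γ : ℝ) (hωA : 0 < ωA)
    (hA : ∀ x y : H, ωA * ‖A x - A y‖ ^ 2 ≤ ⟪A x - A y, x - y⟫_ℝ)
    (hJB : ∀ x y : H, ‖JB x - JB y‖ ^ 2 ≤ ⟪JB x - JB y, x - y⟫_ℝ)
    (hJC : ∀ x y : H, ‖JC x - JC y‖ ^ 2 ≤ ⟪JC x - JC y, x - y⟫_ℝ)
    (hγ : 0 < γ) (hγ' : γ < 2 * ωA)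
    (T U : H → H)
    (hT : ∀ v : H, T v = JB ((2 : ℝ) • JC v - v - γ • A (JC v)) + v - JC v)
    (hU : ∀ v : H, U v = v - T v) :
    ∀ x y : H, (4 * ωA - γ) / (4 * ωA) * ‖U x - U y‖ ^ 2 ≤ ⟪U x - U y, x - y⟫_ℝ := by
  intro x y
  set zx := (2 : ℝ) • JC x - x - γ • A (JC x) with hzx
  set zy := (2 : ℝ) • JC y - y - γ • A (JC y) with hzy
  set u := JC x - JC y with hu
  set a := A (JC x) - A (JC y) with ha
  set b := JB zx - JB zy with hb
  set w := x - y with hw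
  have hUU : U x - U y = u - b := by
    rw [hU x, hU y, hT x, hT y, hu, hb, hzx, hzy]
    abel
  have hzd : zx - zy = (2 : ℝ) • u - w - γ • a := by
    rw [hzx, hzy, hu, ha, hw]
    module
  have h1 : ‖u‖ ^ 2 ≤ ⟪u, w⟫_ℝ := hJC x y
  have h2 : ‖b‖ ^ 2 ≤ ⟪b, (2 : ℝ) • u - w - γ • a⟫_ℝ := hzd ▸ hJB zx zy
  have h3 : ωA * ‖a‖ ^ 2 ≤ ⟪a, u⟫_ℝ := hA (JC x) (JC y)
  have h2' : ‖b‖ ^ 2 ≤ 2 * ⟪b, u⟫_ℝ - ⟪b, w⟫_ℝ - γ * ⟪b, a⟫_ℝ := by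
    have := h2
    rwa [inner_sub_right, inner_sub_right, real_inner_smul_right,
      real_inner_smul_right] at this
  have hnorm : ‖u - b‖ ^ 2 = ‖u‖ ^ 2 - 2 * ⟪u, b⟫_ℝ + ‖b‖ ^ 2 := norm_sub_sq_real u b
  have hba : ⟪b, a⟫_ℝ = ⟪a, u⟫_ℝ - ⟪u - b, a⟫_ℝ := by
    have h := inner_sub_left (𝕜 := ℝ) u b a
    have h' := real_inner_comm a u
    linarith
  have hbu : ⟪b, u⟫_ℝ = ⟪u, b⟫_ℝ := real_inner_comm u b
  have hyoung : ⟪u - b, a⟫_ℝ ≤ ‖u - b‖ * ‖a‖ := real_inner_le_norm _ _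
  have hsq : (0:ℝ) ≤ (2 * ωA * ‖a‖ - ‖u - b‖) ^ 2 := sq_nonneg _
  have hnorm4 : 4 * ωA * ‖u - b‖ ^ 2 =
      4 * ωA * (‖u‖ ^ 2 - 2 * ⟪u, b⟫_ℝ + ‖b‖ ^ 2) := by rw [hnorm]
  have hba4 : 4 * ωA * γ * ⟪b, a⟫_ℝ =
      4 * ωA * γ * (⟪a, u⟫_ℝ - ⟪u - b, a⟫_ℝ) := by rw [hba]
  rw [hUU, inner_sub_left]
  rw [div_mul_eq_mul_div, div_le_iff₀ (by positivity)]
  nlinarith [mul_le_mul_of_nonneg_left h1 (by positivity : (0:ℝ) ≤ 4 * ωA),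
    mul_le_mul_of_nonneg_left h2' (by positivity : (0:ℝ) ≤ 4 * ωA),
    mul_le_mul_of_nonneg_left h3 (by positivity : (0:ℝ) ≤ 4 * ωA * γ),
    mul_le_mul_of_nonneg_left hyoung (by positivity : (0:ℝ) ≤ 4 * ωA * γ),
    mul_nonneg hγ.le hsq, hnorm4, hba4]
end

section
/- Let H be a real Hilbert space, let A : H → H be monotone and L-Lipschitz continuous, let J : H → H be firmly nonexpansive, let 0 < γ < 1/L, and define U : H → H by U = I − J ∘ (I − γA) − γ(A − A ∘ (J ∘ (I − γA))). Then U is quasi-cocoercive with modulus (1 − γL)/(1 + γL)²; that is, for every x* ∈ H with U(x*) = 0 and every x ∈ H, ⟨U(x), x − x*⟩ ≥ ((1 − γL)/(1 + γL)²)‖U(x)‖². -/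
/-!
Write `y = J (x - γ A x)` and `U x = (x - y) - γ (A x - A y)`. A zero `x*` of `U` satisfies
`x* - y* = γ (A x* - A y*)`, which forces `y* = x*` because `γ A` is a strict contraction; so `x*`
is a fixed point of `J ∘ (I - γ A)`. Firm nonexpansiveness of `J` at `x - γ A x` and
`x* - γ A x*`, together with monotonicity of `A`, gives `⟪U x, y - x*⟫ ≥ 0`, while Cauchy–Schwarz
and the Lipschitz bound give `⟪U x, x - y⟫ ≥ (1 - γL) ‖x - y‖²`. Finally
`‖U x‖ ≤ (1 + γL) ‖x - y‖`.
-/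

open InnerProductSpace

section ForwardBackwardForward

variable {H : Type*} [NormedAddCommGroup H] [InnerProductSpace ℝ H] {A J : H → H} {L γ : ℝ}

lemma eq_of_sub_eq_smul_sub_of_lipschitz (hLip : ∀ x y : H, ‖A x - A y‖ ≤ L * ‖x - y‖)
    (hγ : 0 ≤ γ) (hγL : γ * L < 1) {u v : H} (h : u - v = γ • (A u - A v)) : u = v := by
  have hle : ‖u - v‖ ≤ γ * L * ‖u - v‖ :=
    calc ‖u - v‖ = γ * ‖A u - A v‖ := by rw [h, norm_smul, Real.norm_of_nonneg hγ]
      _ ≤ γ * (L * ‖u - v‖) := mul_le_mul_of_nonneg_left (hLip u v) hγ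
      _ = γ * L * ‖u - v‖ := by ring
  have hzero : ‖u - v‖ = 0 := by nlinarith [norm_nonneg (u - v)]
  rwa [norm_eq_zero, sub_eq_zero] at hzero

lemma norm_sub_sub_smul_le (hLip : ∀ x y : H, ‖A x - A y‖ ≤ L * ‖x - y‖) (hγ : 0 ≤ γ)
    (x y : H) : ‖x - y - γ • (A x - A y)‖ ≤ (1 + γ * L) * ‖x - y‖ :=
  calc ‖x - y - γ • (A x - A y)‖ ≤ ‖x - y‖ + γ * ‖A x - A y‖ := by
        simpa only [norm_smul, Real.norm_of_nonneg hγ] using norm_sub_le (x - y) (γ • (A x - A y))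
    _ ≤ ‖x - y‖ + γ * (L * ‖x - y‖) := by gcongr; exact hLip x y
    _ = (1 + γ * L) * ‖x - y‖ := by ring

lemma one_sub_mul_norm_sq_le_inner_sub_sub_smul
    (hLip : ∀ x y : H, ‖A x - A y‖ ≤ L * ‖x - y‖) (hγ : 0 ≤ γ) (x y : H) :
    (1 - γ * L) * ‖x - y‖ ^ 2 ≤ ⟪x - y - γ • (A x - A y), x - y⟫_ℝ := by
  have hcs : ⟪A x - A y, x - y⟫_ℝ ≤ L * ‖x - y‖ ^ 2 :=
    calc ⟪A x - A y, x - y⟫_ℝ ≤ ‖A x - A y‖ * ‖x - y‖ := real_inner_le_norm _ _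
      _ ≤ L * ‖x - y‖ * ‖x - y‖ := by gcongr; exact hLip x y
      _ = L * ‖x - y‖ ^ 2 := by ring
  rw [inner_sub_left, real_inner_smul_left, real_inner_self_eq_norm_sq]
  nlinarith [mul_le_mul_of_nonneg_left hcs hγ]

/-- Firm nonexpansiveness of `J` between `x - γ A x` and the fixed point `xs` of
`J ∘ (I - γ A)`, with the term `γ ⟪A y - A xs, y - xs⟫` discarded by monotonicity. -/
lemma inner_sub_sub_smul_nonneg (hmono : ∀ x y : H, 0 ≤ ⟪A x - A y, x - y⟫_ℝ)
    (hJ : ∀ x y : H, ‖J x - J y‖ ^ 2 ≤ ⟪J x - J y, x - y⟫_ℝ) (hγ : 0 ≤ γ) {xs : H}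
    (hfix : J (xs - γ • A xs) = xs) (x : H) :
    0 ≤ ⟪x - J (x - γ • A x) - γ • (A x - A (J (x - γ • A x))), J (x - γ • A x) - xs⟫_ℝ := by
  have hfirm := hJ (x - γ • A x) (xs - γ • A xs)
  rw [hfix] at hfirm
  set y := J (x - γ • A x)
  have hsplit : x - γ • A x - (xs - γ • A xs)
      = (x - y - γ • (A x - A y)) + (y - xs) - γ • (A y - A xs) := by module
  rw [hsplit, inner_sub_right, inner_add_right, real_inner_smul_right,
    real_inner_self_eq_norm_sq] at hfirm
  have hm : 0 ≤ ⟪y - xs, A y - A xs⟫_ℝ := by rw [real_inner_comm]; exact hmono y xs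
  rw [real_inner_comm]
  nlinarith [mul_nonneg hγ hm]

lemma one_sub_mul_norm_sq_le_inner_fbf_residual
    (hmono : ∀ x y : H, 0 ≤ ⟪A x - A y, x - y⟫_ℝ)
    (hLip : ∀ x y : H, ‖A x - A y‖ ≤ L * ‖x - y‖)
    (hJ : ∀ x y : H, ‖J x - J y‖ ^ 2 ≤ ⟪J x - J y, x - y⟫_ℝ) (hγ : 0 ≤ γ) {xs : H}
    (hfix : J (xs - γ • A xs) = xs) (x : H) :
    (1 - γ * L) * ‖x - J (x - γ • A x)‖ ^ 2
      ≤ ⟪x - J (x - γ • A x) - γ • (A x - A (J (x - γ • A x))), x - xs⟫_ℝ := by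
  set y := J (x - γ • A x)
  have hnear := one_sub_mul_norm_sq_le_inner_sub_sub_smul hLip hγ x y
  have hfar := inner_sub_sub_smul_nonneg hmono hJ hγ hfix x
  rw [show x - xs = (x - y) + (y - xs) by abel, inner_add_right]
  linarith

end ForwardBackwardForward

theorem stmt18_general
    {H : Type*} [NormedAddCommGroup H] [InnerProductSpace ℝ H]
    (A J : H → H) (L γ : ℝ)
    (hmono : ∀ x y : H, 0 ≤ ⟪A x - A y, x - y⟫_ℝ)
    (hLip : ∀ x y : H, ‖A x - A y‖ ≤ L * ‖x - y‖)
    (hJ : ∀ x y : H, ‖J x - J y‖ ^ 2 ≤ ⟪J x - J y, x - y⟫_ℝ)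
    (hγ : 0 < γ) (hγ' : γ < 1 / L)
    (U : H → H)
    (hU : ∀ x : H, U x = x - J (x - γ • A x) - γ • (A x - A (J (x - γ • A x)))) :
    ∀ xs : H, U xs = 0 → ∀ x : H,
      (1 - γ * L) / (1 + γ * L) ^ 2 * ‖U x‖ ^ 2 ≤ ⟪U x, x - xs⟫_ℝ := by
  intro xs hxs x
  have hL : 0 < L := one_div_pos.mp (hγ.trans hγ')
  have hγL : γ * L < 1 := by simpa using (lt_div_iff₀ hL).mp hγ'
  have hfix : J (xs - γ • A xs) = xs :=
    (eq_of_sub_eq_smul_sub_of_lipschitz hLip hγ.le hγL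
      (sub_eq_zero.mp ((hU xs).symm.trans hxs))).symm
  have hlower := one_sub_mul_norm_sq_le_inner_fbf_residual hmono hLip hJ hγ.le hfix x
  have hupper := norm_sub_sub_smul_le hLip hγ.le x (J (x - γ • A x))
  rw [← hU x] at hlower hupper
  calc (1 - γ * L) / (1 + γ * L) ^ 2 * ‖U x‖ ^ 2
      ≤ (1 - γ * L) / (1 + γ * L) ^ 2 * ((1 + γ * L) * ‖x - J (x - γ • A x)‖) ^ 2 := by
        gcongr
    _ = (1 - γ * L) * ‖x - J (x - γ • A x)‖ ^ 2 := by field_simp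
    _ ≤ ⟪U x, x - xs⟫_ℝ := hlower

theorem stmt18
    {H : Type*} [NormedAddCommGroup H] [InnerProductSpace ℝ H] [CompleteSpace H]
    (A J : H → H) (L γ : ℝ) (hL : 0 < L)
    (hmono : ∀ x y : H, 0 ≤ ⟪A x - A y, x - y⟫_ℝ)
    (hLip : ∀ x y : H, ‖A x - A y‖ ≤ L * ‖x - y‖)
    (hJ : ∀ x y : H, ‖J x - J y‖ ^ 2 ≤ ⟪J x - J y, x - y⟫_ℝ)
    (hγ : 0 < γ) (hγ' : γ < 1 / L)
    (U : H → H)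
    (hU : ∀ x : H, U x = x - J (x - γ • A x) - γ • (A x - A (J (x - γ • A x)))) :
    ∀ xs : H, U xs = 0 → ∀ x : H,
      (1 - γ * L) / (1 + γ * L) ^ 2 * ‖U x‖ ^ 2 ≤ ⟪U x, x - xs⟫_ℝ :=
  stmt18_general A J L γ hmono hLip hJ hγ hγ' U hU
end
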